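/- arXiv:2104.02120 — 3 statements merged into one kernel-verified Lean document; each statement's English description precedes it below -/
import Mathlib

section
/- Under the assumptions of the relaxed triangle inequality theorem for the quasi-metric ρ, for any two landmarks z^l, z^j on the invariant manifold with ‖z^l − z^j‖ ≤ R√τ, the symmetrized quasi-metric ρ satisfies the two-sided comparison with the Euclidean distance: 1/min{α_l, α_j} ≤ sqrt(χ²_d(p))·ρ(z^l, z^j)/‖z^l − z^j‖ ≤ 1/min{β_l, β_j}. -/
/-!
Split the chord `δ = z^l - z^j` along the oblique decomposition at `z^j` as `δ = u + f`, with
`u = P^j z^l - z^j` tangent and `f` in the kernel of `P^j`. Since the tangent space and the kernel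
meet at angle at least `θ = θ^j`, `‖δ‖ ≥ sin θ ‖u‖`. Conversely, the distance from `f` to the
tangent space is at least `sin θ ‖f‖`; it equals the distance from `δ`, which the chord condition
bounds by `sin θ_c ‖δ‖`. The orthogonal projection of `δ` then has norm at least `cos θ_c ‖δ‖`, and
that of `f` at most `cos θ ‖f‖`, whence `‖u‖ ≥ (cos θ_c - sin θ_c cos θ / sin θ) ‖δ‖`. The
eigenvalue bounds of `Λ^†` on the tangent space turn these into bounds on `ρ̃(z^l, z^j)`, and the
`max` in `ρ` pairs with the `min` in the constants.
-/

open Matrix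

noncomputable def eucEnorm {D : ℕ} (v : Fin D → ℝ) : ℝ := Real.sqrt (∑ i, v i ^ 2)

open Real
open scoped RealInnerProductSpace

namespace Submodule

variable {E : Type*} [NormedAddCommGroup E] [InnerProductSpace ℝ E]
  (K : Submodule ℝ E) [K.HasOrthogonalProjection]

theorem norm_sub_starProjection_le_norm_sub {p : E} (hp : p ∈ K) (y : E) :
    ‖y - K.starProjection y‖ ≤ ‖y - p‖ := by
  rw [starProjection_minimal]
  exact ciInf_le ⟨0, Set.forall_mem_range.2 fun _ => norm_nonneg _⟩ (⟨p, hp⟩ : K)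

theorem norm_sq_eq_norm_starProjection_sq_add (y : E) :
    ‖y‖ ^ 2 = ‖K.starProjection y‖ ^ 2 + ‖y - K.starProjection y‖ ^ 2 := by
  simpa [starProjection_orthogonal_val] using K.norm_sq_eq_add_norm_sq_starProjection y

theorem norm_starProjection_le_of_abs_inner_le {f : E} {c : ℝ} (hc : 0 ≤ c)
    (h : ∀ t ∈ K, |⟪t, f⟫| ≤ c * ‖t‖ * ‖f‖) : ‖K.starProjection f‖ ≤ c * ‖f‖ := by
  set q := K.starProjection f
  have hq : ‖q‖ ^ 2 ≤ c * ‖q‖ * ‖f‖ := by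
    have : ‖q‖ ^ 2 = ⟪q, f⟫ := by
      rw [← real_inner_self_eq_norm_sq, eq_comm, ← sub_eq_zero, ← inner_sub_right]
      exact K.sub_starProjection_mem_orthogonal f q (K.starProjection_apply_mem f)
    exact this ▸ (le_abs_self _).trans (h q (K.starProjection_apply_mem f))
  rcases (norm_nonneg q).eq_or_lt with h0 | hpos
  · rw [← h0]; positivity
  · nlinarith

theorem sin_mul_norm_le_norm_sub_starProjection {f : E} {θ : ℝ} (hcos : 0 ≤ cos θ)
    (h : ∀ t ∈ K, |⟪t, f⟫| ≤ cos θ * ‖t‖ * ‖f‖) :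
    sin θ * ‖f‖ ≤ ‖f - K.starProjection f‖ := by
  have hq := K.norm_starProjection_le_of_abs_inner_le hcos h
  have hsq : (sin θ * ‖f‖) ^ 2 ≤ ‖f - K.starProjection f‖ ^ 2 := by
    have := K.norm_sq_eq_norm_starProjection_sq_add f
    have := pow_le_pow_left₀ (norm_nonneg _) hq 2
    nlinarith [sin_sq_add_cos_sq θ]
  exact (le_abs_self _).trans (abs_le_of_sq_le_sq hsq (norm_nonneg _))

theorem cos_mul_norm_le_norm_starProjection {δ p : E} {θ : ℝ} (hp : p ∈ K)
    (h : ‖δ - p‖ ≤ sin θ * ‖δ‖) : cos θ * ‖δ‖ ≤ ‖K.starProjection δ‖ := by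
  have hsq : (cos θ * ‖δ‖) ^ 2 ≤ ‖K.starProjection δ‖ ^ 2 := by
    have := K.norm_sq_eq_norm_starProjection_sq_add δ
    have := pow_le_pow_left₀ (norm_nonneg _)
      ((K.norm_sub_starProjection_le_norm_sub hp δ).trans h) 2
    nlinarith [sin_sq_add_cos_sq θ]
  exact (le_abs_self _).trans (abs_le_of_sq_le_sq hsq (norm_nonneg _))

end Submodule

section ObliqueSplitting

variable {E : Type*} [NormedAddCommGroup E] [InnerProductSpace ℝ E]

theorem sin_mul_norm_le_norm_add {u f : E} {θ : ℝ} (h : |⟪u, f⟫| ≤ cos θ * ‖u‖ * ‖f‖) :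
    sin θ * ‖u‖ ≤ ‖u + f‖ := by
  have hsq : (sin θ * ‖u‖) ^ 2 ≤ ‖u + f‖ ^ 2 := by
    rw [norm_add_sq_real]
    nlinarith [neg_abs_le ⟪u, f⟫, sin_sq_add_cos_sq θ, sq_nonneg (‖f‖ - cos θ * ‖u‖)]
  exact (le_abs_self _).trans (abs_le_of_sq_le_sq hsq (norm_nonneg _))

theorem cos_sub_sin_div_tan_mul_norm_add_le {K : Submodule ℝ E} [K.HasOrthogonalProjection]
    {u f p : E} {θc θ : ℝ} (hsin : 0 < sin θ) (hcos : 0 ≤ cos θ)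
    (hangle : ∀ t ∈ K, |⟪t, f⟫| ≤ cos θ * ‖t‖ * ‖f‖) (hu : u ∈ K) (hp : p ∈ K)
    (hchord : ‖u + f - p‖ ≤ sin θc * ‖u + f‖) :
    (cos θc - sin θc / tan θ) * ‖u + f‖ ≤ ‖u‖ := by
  have hproj : K.starProjection (u + f) = u + K.starProjection f := by
    rw [map_add, K.starProjection_eq_self_iff.2 hu]
  have hf : sin θ * ‖f‖ ≤ sin θc * ‖u + f‖ :=
    calc sin θ * ‖f‖ ≤ ‖f - K.starProjection f‖ :=
          K.sin_mul_norm_le_norm_sub_starProjection hcos hangle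
      _ = ‖u + f - K.starProjection (u + f)‖ := by rw [hproj, add_sub_add_left_eq_sub]
      _ ≤ ‖u + f - p‖ := K.norm_sub_starProjection_le_norm_sub hp _
      _ ≤ sin θc * ‖u + f‖ := hchord
  have hδ : cos θc * ‖u + f‖ ≤ ‖u‖ + cos θ * ‖f‖ :=
    calc cos θc * ‖u + f‖ ≤ ‖K.starProjection (u + f)‖ :=
          K.cos_mul_norm_le_norm_starProjection hp hchord
      _ ≤ ‖u‖ + ‖K.starProjection f‖ := hproj ▸ norm_add_le _ _
      _ ≤ ‖u‖ + cos θ * ‖f‖ := by gcongr; exact K.norm_starProjection_le_of_abs_inner_le hcos hangle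
  have hcf : cos θ * ‖f‖ ≤ cos θ * (sin θc * ‖u + f‖ / sin θ) :=
    mul_le_mul_of_nonneg_left ((le_div_iff₀ hsin).2 (by linarith)) hcos
  calc (cos θc - sin θc / tan θ) * ‖u + f‖
      = cos θc * ‖u + f‖ - cos θ * (sin θc * ‖u + f‖ / sin θ) := by
        rw [tan_eq_sin_div_cos]; field_simp
    _ ≤ ‖u‖ := by linarith

end ObliqueSplitting

section EuclideanCoordinates

variable {D : ℕ}

theorem eucEnorm_eq_norm (v : Fin D → ℝ) : eucEnorm v = ‖WithLp.toLp 2 v‖ := by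
  simp [eucEnorm, EuclideanSpace.norm_eq]

theorem dotProduct_eq_inner (v w : Fin D → ℝ) : v ⬝ᵥ w = ⟪WithLp.toLp 2 v, WithLp.toLp 2 w⟫ := by
  simp [EuclideanSpace.inner_toLp_toLp, dotProduct_comm]

theorem eucEnorm_sub_comm (v w : Fin D → ℝ) : eucEnorm (v - w) = eucEnorm (w - v) := by
  simp only [eucEnorm_eq_norm, WithLp.toLp_sub, norm_sub_rev]

theorem eucEnorm_sub_pos {v w : Fin D → ℝ} (h : v ≠ w) : 0 < eucEnorm (v - w) := by
  simpa [eucEnorm_eq_norm, sub_eq_zero] using h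

theorem chord_eucEnorm_bounds {T F : Submodule ℝ (Fin D → ℝ)} {θc θ : ℝ}
    (hsin : 0 < sin θ) (hcos : 0 ≤ cos θ)
    (hangle : ∀ u ∈ T, ∀ v ∈ F, |u ⬝ᵥ v| ≤ cos θ * eucEnorm u * eucEnorm v)
    {u f p : Fin D → ℝ} (hu : u ∈ T) (hf : f ∈ F) (hp : p ∈ T)
    (hchord : eucEnorm (u + f - p) ≤ sin θc * eucEnorm (u + f)) :
    (cos θc - sin θc / tan θ) * eucEnorm (u + f) ≤ eucEnorm u ∧
      sin θ * eucEnorm u ≤ eucEnorm (u + f) := by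
  let K := T.comap (WithLp.linearEquiv 2 ℝ (Fin D → ℝ)).toLinearMap
  have hangle' : ∀ t ∈ K, |⟪t, WithLp.toLp 2 f⟫| ≤ cos θ * ‖t‖ * ‖WithLp.toLp 2 f‖ := by
    intro t ht
    simpa [dotProduct_eq_inner, eucEnorm_eq_norm] using hangle t.ofLp ht f hf
  simp only [eucEnorm_eq_norm, WithLp.toLp_add, WithLp.toLp_sub] at hchord ⊢
  exact ⟨cos_sub_sin_div_tan_mul_norm_add_le hsin hcos hangle' (K := K) hu hp hchord,
    sin_mul_norm_le_norm_add (hangle' _ hu)⟩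

end EuclideanCoordinates

theorem div_sqrt_le_sqrt_of_sq_div_le {x q s : ℝ} (hx : 0 ≤ x) (h : x ^ 2 / s ≤ q) :
    x / √s ≤ √q := by
  rw [← Real.sqrt_sq hx, ← Real.sqrt_div (sq_nonneg x)]
  exact Real.sqrt_le_sqrt h

theorem sqrt_le_div_sqrt_of_le_sq_div {x q s : ℝ} (hx : 0 ≤ x) (h : q ≤ x ^ 2 / s) :
    √q ≤ x / √s := by
  rw [← Real.sqrt_sq hx, ← Real.sqrt_div (sq_nonneg x)]
  exact Real.sqrt_le_sqrt h

theorem sqrt_quadForm_chord_bounds {D : ℕ} {T F : Submodule ℝ (Fin D → ℝ)}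
    {M : Matrix (Fin D) (Fin D) ℝ} {σ1 σd θc θ : ℝ} (hsin : 0 < sin θ) (hcos : 0 ≤ cos θ)
    (hangle : ∀ u ∈ T, ∀ v ∈ F, |u ⬝ᵥ v| ≤ cos θ * eucEnorm u * eucEnorm v)
    (hspec : ∀ v ∈ T, eucEnorm v ^ 2 / σ1 ≤ v ⬝ᵥ (M *ᵥ v) ∧ v ⬝ᵥ (M *ᵥ v) ≤ eucEnorm v ^ 2 / σd)
    {u f p : Fin D → ℝ} (hu : u ∈ T) (hf : f ∈ F) (hp : p ∈ T)
    (hchord : eucEnorm (u + f - p) ≤ sin θc * eucEnorm (u + f)) :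
    eucEnorm (u + f) / (√σ1 / (cos θc - sin θc / tan θ)) ≤ √(u ⬝ᵥ (M *ᵥ u)) ∧
      √(u ⬝ᵥ (M *ᵥ u)) ≤ eucEnorm (u + f) / (sin θ * √σd) := by
  obtain ⟨hlow, hup⟩ := chord_eucEnorm_bounds hsin hcos hangle hu hf hp hchord
  have hu0 : 0 ≤ eucEnorm u := Real.sqrt_nonneg _
  constructor
  · calc eucEnorm (u + f) / (√σ1 / (cos θc - sin θc / tan θ))
        = (cos θc - sin θc / tan θ) * eucEnorm (u + f) / √σ1 := by rw [div_div_eq_mul_div, mul_comm]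
      _ ≤ eucEnorm u / √σ1 := div_le_div_of_nonneg_right hlow (Real.sqrt_nonneg _)
      _ ≤ √(u ⬝ᵥ (M *ᵥ u)) := div_sqrt_le_sqrt_of_sq_div_le hu0 (hspec u hu).1
  · calc √(u ⬝ᵥ (M *ᵥ u)) ≤ eucEnorm u / √σd := sqrt_le_div_sqrt_of_le_sq_div hu0 (hspec u hu).2
      _ ≤ eucEnorm (u + f) / sin θ / √σd :=
        div_le_div_of_nonneg_right ((le_div_iff₀ hsin).2 (by linarith)) (Real.sqrt_nonneg _)
      _ = eucEnorm (u + f) / (sin θ * √σd) := div_div _ _ _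

theorem one_div_min_le_max_div_le_one_div_min {Δ a₁ a₂ b₁ b₂ x₁ x₂ : ℝ} (hΔ : 0 < Δ)
    (hb₁ : 0 < b₁) (hb₂ : 0 < b₂) (h₁ : Δ / a₁ ≤ x₁ ∧ x₁ ≤ Δ / b₁)
    (h₂ : Δ / a₂ ≤ x₂ ∧ x₂ ≤ Δ / b₂) :
    1 / min a₁ a₂ ≤ max x₁ x₂ / Δ ∧ max x₁ x₂ / Δ ≤ 1 / min b₁ b₂ := by
  rw [le_div_iff₀ hΔ, div_le_iff₀ hΔ, one_div_mul_eq_div, one_div_mul_eq_div]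
  have hb := lt_min hb₁ hb₂
  refine ⟨?_, max_le ?_ ?_⟩
  · rcases min_choice a₁ a₂ with h | h <;> rw [h]
    exacts [le_max_of_le_left h₁.1, le_max_of_le_right h₂.1]
  · exact h₁.2.trans (div_le_div_of_nonneg_left hΔ.le hb (min_le_left _ _))
  · exact h₂.2.trans (div_le_div_of_nonneg_left hΔ.le hb (min_le_right _ _))

theorem stmt7_general {D L : ℕ}
    (z : Fin L → (Fin D → ℝ))
    (T F : Fin L → Submodule ℝ (Fin D → ℝ))
    (P : Fin L → (Fin D → ℝ) → (Fin D → ℝ))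
    (Λdag : Fin L → Matrix (Fin D) (Fin D) ℝ)
    (σ1 σd : Fin L → ℝ) (θc : ℝ) (θ : Fin L → ℝ)
    (χ R τ : ℝ)
    (ρt : (Fin D → ℝ) → (Fin D → ℝ) → ℝ)
    (ρ : Fin L → Fin L → ℝ)
    (hχ : 0 < χ)
    (hσd : ∀ l, 0 < σd l)
    (hθc : 0 ≤ θc ∧ θc < Real.pi / 2)
    (hθ : ∀ l, θc < θ l ∧ θ l ≤ Real.pi / 2)
    (hPrange : ∀ l w, P l w - z l ∈ T l)
    (hPker : ∀ l w, w - P l w ∈ F l)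
    (hangleTF : ∀ l, ∀ u ∈ T l, ∀ v ∈ F l,
      |u ⬝ᵥ v| ≤ Real.cos (θ l) * eucEnorm u * eucEnorm v)
    (hspec : ∀ l, ∀ v ∈ T l,
      (eucEnorm v) ^ 2 / σ1 l ≤ v ⬝ᵥ ((Λdag l) *ᵥ v) ∧
        v ⬝ᵥ ((Λdag l) *ᵥ v) ≤ (eucEnorm v) ^ 2 / σd l)
    (hρt_near : ∀ l w, eucEnorm (w - z l) ≤ R * Real.sqrt τ →
      ρt w (z l) = Real.sqrt (((P l w - z l) ⬝ᵥ ((Λdag l) *ᵥ (P l w - z l))) / χ))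
    (hρ : ∀ l j, ρ l j = max (ρt (z l) (z j)) (ρt (z j) (z l)))
    (hchord : ∀ l j, eucEnorm (z l - z j) ≤ R * Real.sqrt τ →
      ∃ p ∈ T j, eucEnorm ((z l - z j) - p) ≤ Real.sin θc * eucEnorm (z l - z j)) :
    ∀ l j : Fin L, l ≠ j → z l ≠ z j → eucEnorm (z l - z j) ≤ R * Real.sqrt τ →
      1 / min (Real.sqrt (σ1 l) / (Real.cos θc - Real.sin θc / Real.tan (θ l)))
              (Real.sqrt (σ1 j) / (Real.cos θc - Real.sin θc / Real.tan (θ j)))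
          ≤ Real.sqrt χ * ρ l j / eucEnorm (z l - z j) ∧
      Real.sqrt χ * ρ l j / eucEnorm (z l - z j)
          ≤ 1 / min (Real.sin (θ l) * Real.sqrt (σd l))
                    (Real.sin (θ j) * Real.sqrt (σd j)) := by
  have hsin : ∀ m, 0 < sin (θ m) := fun m =>
    sin_pos_of_pos_of_lt_pi (hθc.1.trans_lt (hθ m).1) (by linarith [(hθ m).2, pi_pos])
  have hcos : ∀ m, 0 ≤ cos (θ m) := fun m =>
    cos_nonneg_of_mem_Icc ⟨by linarith [hθc.1, (hθ m).1, pi_pos], (hθ m).2⟩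
  have hρt : ∀ a b, eucEnorm (z a - z b) ≤ R * √τ →
      eucEnorm (z a - z b) / (√(σ1 b) / (cos θc - sin θc / tan (θ b))) ≤ √χ * ρt (z a) (z b) ∧
        √χ * ρt (z a) (z b) ≤ eucEnorm (z a - z b) / (sin (θ b) * √(σd b)) := by
    intro a b hab
    obtain ⟨p, hp, hchord⟩ := hchord a b hab
    have hsplit : z a - z b = (P b (z a) - z b) + (z a - P b (z a)) := by abel
    rw [hρt_near b (z a) hab, sqrt_div' _ hχ.le, mul_div_cancel₀ _ (sqrt_pos.2 hχ).ne', hsplit]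
    exact sqrt_quadForm_chord_bounds (hsin b) (hcos b) (hangleTF b) (hspec b)
      (hPrange b (z a)) (hPker b (z a)) hp (hsplit ▸ hchord)
  intro l j _ hne hnear
  have hlj := hρt j l (eucEnorm_sub_comm (z j) (z l) ▸ hnear)
  rw [eucEnorm_sub_comm] at hlj
  rw [hρ, mul_max_of_nonneg _ _ (sqrt_nonneg χ), max_comm]
  exact one_div_min_le_max_div_le_one_div_min (eucEnorm_sub_pos hne)
    (mul_pos (hsin l) (sqrt_pos.2 (hσd l))) (mul_pos (hsin j) (sqrt_pos.2 (hσd j)))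
    hlj (hρt l j hnear)

/-- Two-sided comparison of the symmetrized quasi-metric `ρ` with the Euclidean distance:
for nearby landmarks, `1/min{α_l, α_j} ≤ √χ²_d(p) ρ(z^l, z^j)/‖z^l − z^j‖ ≤ 1/min{β_l, β_j}`,
where `α_l = √σ₁(Λ^l)/(cos θ_c − sin θ_c/tan θ^l)` and `β_l = sin θ^l √σ_d(Λ^l)`. -/
theorem stmt7 {D L : ℕ} (d : ℕ)
    (z : Fin L → (Fin D → ℝ))
    (T F : Fin L → Submodule ℝ (Fin D → ℝ))
    (P : Fin L → (Fin D → ℝ) → (Fin D → ℝ))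
    (Λdag : Fin L → Matrix (Fin D) (Fin D) ℝ)
    (σ1 σd : Fin L → ℝ) (θc : ℝ) (θ : Fin L → ℝ)
    (χ R τ : ℝ)
    (ρt : (Fin D → ℝ) → (Fin D → ℝ) → ℝ)
    (ρ : Fin L → Fin L → ℝ)
    (hχ : 0 < χ) (hR : 0 < R) (hτ : 0 < τ)
    (hσd : ∀ l, 0 < σd l) (hσ1 : ∀ l, σd l ≤ σ1 l)
    (hθc : 0 ≤ θc ∧ θc < Real.pi / 2)
    (hθ : ∀ l, θc < θ l ∧ θ l ≤ Real.pi / 2)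
    (hPrange : ∀ l w, P l w - z l ∈ T l)
    (hPker : ∀ l w, w - P l w ∈ F l)
    (hangleTF : ∀ l, ∀ u ∈ T l, ∀ v ∈ F l,
      |u ⬝ᵥ v| ≤ Real.cos (θ l) * eucEnorm u * eucEnorm v)
    (hspec : ∀ l, ∀ v ∈ T l,
      (eucEnorm v) ^ 2 / σ1 l ≤ v ⬝ᵥ ((Λdag l) *ᵥ v) ∧
        v ⬝ᵥ ((Λdag l) *ᵥ v) ≤ (eucEnorm v) ^ 2 / σd l)
    (hρt_near : ∀ l w, eucEnorm (w - z l) ≤ R * Real.sqrt τ →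
      ρt w (z l) = Real.sqrt (((P l w - z l) ⬝ᵥ ((Λdag l) *ᵥ (P l w - z l))) / χ))
    (hρt_far : ∀ l w, ¬ eucEnorm (w - z l) ≤ R * Real.sqrt τ →
      ρt w (z l) = R * Real.sqrt (χ * σd l) * Real.sqrt τ)
    (hρ : ∀ l j, ρ l j = max (ρt (z l) (z j)) (ρt (z j) (z l)))
    (hchord : ∀ l j, eucEnorm (z l - z j) ≤ R * Real.sqrt τ →
      ∃ p ∈ T j, eucEnorm ((z l - z j) - p) ≤ Real.sin θc * eucEnorm (z l - z j)) :
    ∀ l j : Fin L, l ≠ j → z l ≠ z j → eucEnorm (z l - z j) ≤ R * Real.sqrt τ →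
      1 / min (Real.sqrt (σ1 l) / (Real.cos θc - Real.sin θc / Real.tan (θ l)))
              (Real.sqrt (σ1 j) / (Real.cos θc - Real.sin θc / Real.tan (θ j)))
          ≤ Real.sqrt χ * ρ l j / eucEnorm (z l - z j) ∧
      Real.sqrt χ * ρ l j / eucEnorm (z l - z j)
          ≤ 1 / min (Real.sin (θ l) * Real.sqrt (σd l))
                    (Real.sin (θ j) * Real.sqrt (σd j)) :=
  stmt7_general z T F P Λdag σ1 σd θc θ χ R τ ρt ρ hχ hσd hθc hθ hPrange hPker hangleTF hspec
    hρt_near hρ hchord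
end

section
/- Let V, W ⊆ R^D be subspaces with dim V = d and dim W = D − d, such that the minimal principal angle θ between V and W is positive (so V ⊕ W = R^D). Let z₀ ∈ R^D, and let P denote the affine oblique projection onto z₀ + V with kernel W: P(z) = U_V U_V^T (E E^T)^† (z − z₀) + z₀, where U_V, U_W are matrices with orthonormal columns spanning V and W respectively, and E = [U_V, U_W]. Then for every z in a ball around z₀ such that the direction z − z₀ makes angle φ with V satisfying 0 ≤ φ ≤ π/2, the projection satisfies (cos φ − sin φ/tan θ)·‖z − z₀‖ ≤ ‖P(z) − z₀‖ ≤ (cos φ + sin φ/tan θ)·‖z − z₀‖. -/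
open Matrix RealInnerProductSpace Real WithLp

/-!
Since `E Eᵀ = U_V U_Vᵀ + U_W U_Wᵀ`, the direction `x = z - z₀` splits as `x = v + w` with
`v = P z - z₀ ∈ V` and `w ∈ W`. Let `Π` be the orthogonal projection onto `V`. Then
`v = Π x - Π w` and `x - Π x = w - Π w`, whose norm is `sin φ ‖x‖`. The angle condition gives
`‖Π w‖ ≤ cos θ ‖w‖`, hence `‖w - Π w‖ ≥ sin θ ‖w‖` by Pythagoras, so
`‖Π w‖ ≤ ‖w - Π w‖ / tan θ = sin φ ‖x‖ / tan θ`, and the triangle inequality around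
`‖Π x‖ = cos φ ‖x‖` gives both bounds.
-/

section Projection

variable {F : Type*} [NormedAddCommGroup F] [InnerProductSpace ℝ F]

theorem Submodule.inner_le_mul_norm_mul_norm_of_norm_eq_one {K L : Submodule ℝ F} {c : ℝ}
    (h : ∀ u ∈ K, ∀ w ∈ L, ‖u‖ = 1 → ‖w‖ = 1 → ⟪u, w⟫ ≤ c) :
    ∀ u ∈ K, ∀ w ∈ L, ⟪u, w⟫ ≤ c * ‖u‖ * ‖w‖ := by
  intro u hu w hw
  rcases eq_or_ne u 0 with rfl | hu0
  · simp
  rcases eq_or_ne w 0 with rfl | hw0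
  · simp
  have hunit := h _ (K.smul_mem ‖u‖⁻¹ hu) _ (L.smul_mem ‖w‖⁻¹ hw)
    (norm_smul_inv_norm hu0) (norm_smul_inv_norm hw0)
  rw [real_inner_smul_left, real_inner_smul_right] at hunit
  have hu_pos : 0 < ‖u‖ := norm_pos_iff.mpr hu0
  have hw_pos : 0 < ‖w‖ := norm_pos_iff.mpr hw0
  rw [← mul_assoc, ← mul_inv, inv_mul_le_iff₀ (by positivity)] at hunit
  linarith [show ‖u‖ * ‖w‖ * c = c * ‖u‖ * ‖w‖ by ring]

variable (K : Submodule ℝ F) [K.HasOrthogonalProjection]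

theorem Submodule.norm_sub_starProjection_sq (x : F) :
    ‖x - K.starProjection x‖ ^ 2 = ‖x‖ ^ 2 - ‖K.starProjection x‖ ^ 2 := by
  rw [K.norm_sq_eq_add_norm_sq_starProjection x, Submodule.starProjection_orthogonal_val]
  ring

theorem Submodule.norm_starProjection_le_of_inner_le {c : ℝ} (hc : 0 ≤ c) {w : F}
    (h : ∀ u ∈ K, ⟪u, w⟫ ≤ c * ‖u‖ * ‖w‖) : ‖K.starProjection w‖ ≤ c * ‖w‖ := by
  have hinner : ⟪K.starProjection w, w⟫ = ‖K.starProjection w‖ ^ 2 := by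
    have := K.starProjection_inner_eq_zero w _ (K.starProjection_apply_mem w)
    rw [inner_sub_left, real_inner_self_eq_norm_sq, sub_eq_zero, real_inner_comm] at this
    exact this
  have hle := h _ (K.starProjection_apply_mem w)
  rw [hinner] at hle
  rcases (norm_nonneg (K.starProjection w)).eq_or_lt with h0 | hpos
  · rw [← h0]; positivity
  · nlinarith

theorem Submodule.norm_starProjection_le_norm_sub_div_tan {θ : ℝ} (hθ₀ : 0 < θ)
    (hθ : θ ≤ π / 2) {w : F} (h : ‖K.starProjection w‖ ≤ cos θ * ‖w‖) :
    ‖K.starProjection w‖ ≤ ‖w - K.starProjection w‖ / tan θ := by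
  -- at `θ = π / 2` the junk value `tan (π / 2) = 0` is harmless: then `cos θ = 0`
  have hsin : 0 < sin θ := sin_pos_of_pos_of_lt_pi hθ₀ (by linarith [pi_pos])
  have hcos : 0 ≤ cos θ := cos_nonneg_of_mem_Icc ⟨by linarith [pi_pos], hθ⟩
  have hsq : (sin θ * ‖w‖) ^ 2 ≤ ‖w - K.starProjection w‖ ^ 2 := by
    rw [K.norm_sub_starProjection_sq, mul_pow, sin_sq]
    nlinarith [norm_nonneg (K.starProjection w), norm_nonneg w]
  have hsin_le : sin θ * ‖w‖ ≤ ‖w - K.starProjection w‖ :=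
    (pow_le_pow_iff_left₀ (by positivity) (norm_nonneg _) two_ne_zero).mp hsq
  calc ‖K.starProjection w‖ ≤ cos θ * ‖w‖ := h
    _ = cos θ * (sin θ * ‖w‖) / sin θ := by field_simp
    _ ≤ cos θ * ‖w - K.starProjection w‖ / sin θ := by gcongr
    _ = ‖w - K.starProjection w‖ / tan θ := by rw [tan_eq_sin_div_cos, div_div_eq_mul_div, mul_comm]

theorem Submodule.norm_sub_starProjection_eq_sin_mul {φ : ℝ} (hφ : 0 ≤ sin φ) {x : F}
    (h : ‖K.starProjection x‖ = cos φ * ‖x‖) :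
    ‖x - K.starProjection x‖ = sin φ * ‖x‖ := by
  refine (pow_left_inj₀ (norm_nonneg _) (by positivity) two_ne_zero).mp ?_
  rw [K.norm_sub_starProjection_sq, h, mul_pow, mul_pow, sin_sq]
  ring

theorem Submodule.abs_norm_sub_norm_starProjection_le {L : Submodule ℝ F} {θ : ℝ}
    (hθ₀ : 0 < θ) (hθ : θ ≤ π / 2) (hKL : ∀ u ∈ K, ∀ w ∈ L, ⟪u, w⟫ ≤ cos θ * ‖u‖ * ‖w‖)
    {v w : F} (hv : v ∈ K) (hw : w ∈ L) :
    |‖v‖ - ‖K.starProjection (v + w)‖| ≤ ‖v + w - K.starProjection (v + w)‖ / tan θ := by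
  have hcos : 0 ≤ cos θ := cos_nonneg_of_mem_Icc ⟨by linarith [pi_pos], hθ⟩
  have hPvw : K.starProjection (v + w) = v + K.starProjection w := by
    rw [map_add, (K.starProjection_eq_self_iff).mpr hv]
  have hres : v + w - K.starProjection (v + w) = w - K.starProjection w := by
    rw [hPvw]; abel
  calc |‖v‖ - ‖K.starProjection (v + w)‖| ≤ ‖v - K.starProjection (v + w)‖ :=
        abs_norm_sub_norm_le _ _
    _ = ‖K.starProjection w‖ := by rw [hPvw, sub_add_cancel_left, norm_neg]
    _ ≤ ‖v + w - K.starProjection (v + w)‖ / tan θ := by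
        rw [hres]
        exact K.norm_starProjection_le_norm_sub_div_tan hθ₀ hθ
          (K.norm_starProjection_le_of_inner_le hcos fun u hu => hKL u hu w hw)

end Projection

section EuclideanMatrix

variable {m n : Type*} [Fintype m] [Fintype n]

theorem EuclideanSpace.real_inner_toLp_toLp (x y : n → ℝ) :
    ⟪toLp 2 x, toLp 2 y⟫ = x ⬝ᵥ y := by
  rw [EuclideanSpace.inner_toLp_toLp, star_trivial, dotProduct_comm]

theorem EuclideanSpace.norm_toLp_eq_sqrt_dotProduct (x : n → ℝ) :
    ‖toLp 2 x‖ = √(x ⬝ᵥ x) := by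
  rw [norm_eq_sqrt_real_inner, EuclideanSpace.real_inner_toLp_toLp]

theorem Matrix.real_inner_toLp_mulVec_left (A : Matrix m n ℝ) (x : n → ℝ) (y : m → ℝ) :
    ⟪toLp 2 (A *ᵥ x), toLp 2 y⟫ = ⟪toLp 2 x, toLp 2 (Aᵀ *ᵥ y)⟫ := by
  simp only [EuclideanSpace.real_inner_toLp_toLp]
  rw [dotProduct_transpose_mulVec, dotProduct_comm]

variable [DecidableEq n]

theorem Matrix.norm_toLp_mulVec_of_transpose_mul_self {U : Matrix m n ℝ} (hU : Uᵀ * U = 1)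
    (x : n → ℝ) : ‖toLp 2 (U *ᵥ x)‖ = ‖toLp 2 x‖ := by
  rw [norm_eq_sqrt_real_inner, norm_eq_sqrt_real_inner, U.real_inner_toLp_mulVec_left,
    mulVec_mulVec, hU, one_mulVec]

theorem Matrix.starProjection_range_toEuclideanLin {U : Matrix m n ℝ} (hU : Uᵀ * U = 1)
    (y : m → ℝ) :
    (LinearMap.range (toEuclideanLin U)).starProjection (toLp 2 y) =
      toLp 2 (U *ᵥ (Uᵀ *ᵥ y)) := by
  refine Submodule.eq_starProjection_of_mem_of_inner_eq_zero ⟨toLp 2 (Uᵀ *ᵥ y), rfl⟩ ?_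
  rintro _ ⟨x, rfl⟩
  rw [real_inner_comm, ← toLp_sub, toLpLin_apply, U.real_inner_toLp_mulVec_left, mulVec_sub,
    mulVec_mulVec, hU, one_mulVec, sub_self]
  exact inner_zero_right _

theorem Matrix.inner_le_mul_norm_mul_norm_of_dotProduct_le {p : Type*} [Fintype p] [DecidableEq p]
    {U : Matrix m n ℝ} {W : Matrix m p ℝ} (hU : Uᵀ * U = 1) (hW : Wᵀ * W = 1) {c : ℝ}
    (h : ∀ a b, √(a ⬝ᵥ a) = 1 → √(b ⬝ᵥ b) = 1 → (U *ᵥ a) ⬝ᵥ (W *ᵥ b) ≤ c) :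
    ∀ u ∈ LinearMap.range (toEuclideanLin U), ∀ w ∈ LinearMap.range (toEuclideanLin W),
      ⟪u, w⟫ ≤ c * ‖u‖ * ‖w‖ := by
  refine Submodule.inner_le_mul_norm_mul_norm_of_norm_eq_one ?_
  rintro _ ⟨a, rfl⟩ _ ⟨b, rfl⟩ ha hb
  rw [toLpLin_apply, norm_toLp_mulVec_of_transpose_mul_self hU,
    EuclideanSpace.norm_toLp_eq_sqrt_dotProduct] at ha
  rw [toLpLin_apply, norm_toLp_mulVec_of_transpose_mul_self hW,
    EuclideanSpace.norm_toLp_eq_sqrt_dotProduct] at hb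
  rw [toLpLin_apply, toLpLin_apply, EuclideanSpace.real_inner_toLp_toLp]
  exact h _ _ ha hb

end EuclideanMatrix

theorem stmt8_general {D d e : ℕ}
    (UV : Matrix (Fin D) (Fin d) ℝ) (UW : Matrix (Fin D) (Fin e) ℝ)
    (hUV : UVᵀ * UV = 1) (hUW : UWᵀ * UW = 1)
    (θ : ℝ) (hθ : 0 < θ ∧ θ ≤ Real.pi / 2)
    -- `cos θ = ‖U_W U_Wᵀ U_V‖`: the maximal inner product of unit vectors of `V` and `W`
    (hcos : IsGreatest {c : ℝ | ∃ (a : Fin d → ℝ) (b : Fin e → ℝ),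
      Real.sqrt (a ⬝ᵥ a) = 1 ∧ Real.sqrt (b ⬝ᵥ b) = 1 ∧
      c = (UV *ᵥ a) ⬝ᵥ (UW *ᵥ b)} (Real.cos θ))
    (z₀ : Fin D → ℝ)
    (E : Matrix (Fin D) (Fin d ⊕ Fin e) ℝ) (hE : E = Matrix.fromCols UV UW)
    (hEinv : IsUnit (E * Eᵀ))
    (φ : ℝ) (hφ : 0 ≤ φ ∧ φ ≤ Real.pi / 2) :
    ∀ zz : Fin D → ℝ,
      -- the direction `zz − z₀` makes angle `φ` with `V`
      Real.sqrt ((UV *ᵥ (UVᵀ *ᵥ (zz - z₀))) ⬝ᵥ (UV *ᵥ (UVᵀ *ᵥ (zz - z₀))))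
          = Real.cos φ * Real.sqrt ((zz - z₀) ⬝ᵥ (zz - z₀)) →
      (Real.cos φ - Real.sin φ / Real.tan θ) * Real.sqrt ((zz - z₀) ⬝ᵥ (zz - z₀))
          ≤ Real.sqrt (((UV * UVᵀ * (E * Eᵀ)⁻¹) *ᵥ (zz - z₀)) ⬝ᵥ
              ((UV * UVᵀ * (E * Eᵀ)⁻¹) *ᵥ (zz - z₀))) ∧
      Real.sqrt (((UV * UVᵀ * (E * Eᵀ)⁻¹) *ᵥ (zz - z₀)) ⬝ᵥ
              ((UV * UVᵀ * (E * Eᵀ)⁻¹) *ᵥ (zz - z₀)))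
          ≤ (Real.cos φ + Real.sin φ / Real.tan θ) * Real.sqrt ((zz - z₀) ⬝ᵥ (zz - z₀)) := by
  intro zz hφzz
  set x := zz - z₀
  set T := (E * Eᵀ)⁻¹
  set K := LinearMap.range (toEuclideanLin UV)
  simp only [← EuclideanSpace.norm_toLp_eq_sqrt_dotProduct] at hφzz ⊢
  have hsplit : (UV * UVᵀ * T) *ᵥ x + (UW * UWᵀ * T) *ᵥ x = x := by
    rw [← add_mulVec, ← add_mul, ← fromCols_mul_fromRows, ← transpose_fromCols, ← hE,
      mul_nonsing_inv _ ((isUnit_iff_isUnit_det _).mp hEinv), one_mulVec]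
  have hv : toLp 2 ((UV * UVᵀ * T) *ᵥ x) ∈ K :=
    ⟨toLp 2 ((UVᵀ * T) *ᵥ x), by rw [toLpLin_toLp, toLin'_apply, mulVec_mulVec, Matrix.mul_assoc]⟩
  have hw : toLp 2 ((UW * UWᵀ * T) *ᵥ x) ∈ LinearMap.range (toEuclideanLin UW) :=
    ⟨toLp 2 ((UWᵀ * T) *ᵥ x), by rw [toLpLin_toLp, toLin'_apply, mulVec_mulVec, Matrix.mul_assoc]⟩
  have hP : K.starProjection (toLp 2 x) = toLp 2 (UV *ᵥ (UVᵀ *ᵥ x)) :=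
    starProjection_range_toEuclideanLin hUV x
  have hsin : ‖toLp 2 x - K.starProjection (toLp 2 x)‖ = sin φ * ‖toLp 2 x‖ :=
    K.norm_sub_starProjection_eq_sin_mul
      (sin_nonneg_of_nonneg_of_le_pi hφ.1 (by linarith [pi_pos])) (by rwa [hP])
  have hVW := inner_le_mul_norm_mul_norm_of_dotProduct_le hUV hUW
    fun a b ha hb => hcos.2 ⟨a, b, ha, hb, rfl⟩
  have hangle := K.abs_norm_sub_norm_starProjection_le hθ.1 hθ.2 hVW hv hw
  rw [← toLp_add, hsplit, hsin, hP, hφzz, mul_div_right_comm] at hangle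
  constructor <;> linarith [abs_le.mp hangle]

/-- For the affine oblique projection `P` onto `z₀ + V` with kernel `W`, where the minimal
principal angle between `V` and `W` is `θ > 0`, any point `z` whose direction from `z₀` makes
angle `φ` with `V` satisfies
`(cos φ − sin φ/tan θ)‖z − z₀‖ ≤ ‖P(z) − z₀‖ ≤ (cos φ + sin φ/tan θ)‖z − z₀‖`. -/
theorem stmt8 {D d e : ℕ}
    (UV : Matrix (Fin D) (Fin d) ℝ) (UW : Matrix (Fin D) (Fin e) ℝ)
    (hUV : UVᵀ * UV = 1) (hUW : UWᵀ * UW = 1)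
    (hdim : d + e = D)
    (θ : ℝ) (hθ : 0 < θ ∧ θ ≤ Real.pi / 2)
    -- `cos θ = ‖U_W U_Wᵀ U_V‖`: the maximal inner product of unit vectors of `V` and `W`
    (hcos : IsGreatest {c : ℝ | ∃ (a : Fin d → ℝ) (b : Fin e → ℝ),
      Real.sqrt (a ⬝ᵥ a) = 1 ∧ Real.sqrt (b ⬝ᵥ b) = 1 ∧
      c = (UV *ᵥ a) ⬝ᵥ (UW *ᵥ b)} (Real.cos θ))
    (z₀ : Fin D → ℝ)
    (E : Matrix (Fin D) (Fin d ⊕ Fin e) ℝ) (hE : E = Matrix.fromCols UV UW)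
    (hEinv : IsUnit (E * Eᵀ))
    (φ : ℝ) (hφ : 0 ≤ φ ∧ φ ≤ Real.pi / 2) :
    ∀ zz : Fin D → ℝ,
      -- the direction `zz − z₀` makes angle `φ` with `V`
      Real.sqrt ((UV *ᵥ (UVᵀ *ᵥ (zz - z₀))) ⬝ᵥ (UV *ᵥ (UVᵀ *ᵥ (zz - z₀))))
          = Real.cos φ * Real.sqrt ((zz - z₀) ⬝ᵥ (zz - z₀)) →
      (Real.cos φ - Real.sin φ / Real.tan θ) * Real.sqrt ((zz - z₀) ⬝ᵥ (zz - z₀))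
          ≤ Real.sqrt (((UV * UVᵀ * (E * Eᵀ)⁻¹) *ᵥ (zz - z₀)) ⬝ᵥ
              ((UV * UVᵀ * (E * Eᵀ)⁻¹) *ᵥ (zz - z₀))) ∧
      Real.sqrt (((UV * UVᵀ * (E * Eᵀ)⁻¹) *ᵥ (zz - z₀)) ⬝ᵥ
              ((UV * UVᵀ * (E * Eᵀ)⁻¹) *ᵥ (zz - z₀)))
          ≤ (Real.cos φ + Real.sin φ / Real.tan θ) * Real.sqrt ((zz - z₀) ⬝ᵥ (zz - z₀)) :=
  stmt8_general UV UW hUV hUW θ hθ hcos z₀ E hE hEinv φ hφ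
end

section
/- Let r be a Gaussian random variable with mean 1 and variance s² = b₂²/(2b₁), and θ a fixed angle. Then E[r cos(r + θ − 1)] = e^{−s²/2}·sqrt(1 + s⁴)·cos(θ + θ_s) and E[r sin(r + θ − 1)] = e^{−s²/2}·sqrt(1 + s⁴)·sin(θ + θ_s), where θ_s = arctan(s²). In particular, the averaged slow manifold of the oscillating half-moons system in Cartesian coordinates (z₁, z₂) = (r cos(θ + r − 1), r sin(θ + r − 1)) is a circle of radius r̄ = e^{−b₂²/(4b₁)}·sqrt(1 + (b₂²/(2b₁))²) with angular shift θ_s = arctan(b₂²/(2b₁)). -/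
/-!
The complex moment generating function of `N(μ, v)` is `z ↦ exp (z μ + v z² / 2)`; differentiating
it at `z = i` gives `E[X e^{iX}] = (μ + i v) e^{iμ - v/2}`. For `μ = 1` the factor `1 + i v` has
modulus `√(1 + v²)` and argument `arctan v`, and the two identities are the real and imaginary
parts of `E[X e^{i(X + θ - 1)}] = e^{-v/2} √(1 + v²) e^{i(θ + arctan v)}`.
-/

open MeasureTheory ProbabilityTheory Complex
open scoped NNReal

theorem integral_mul_cexp_mul_gaussianReal (μ : ℝ) (v : ℝ≥0) (z : ℂ) :
    ∫ x, x * cexp (z * x) ∂gaussianReal μ v = (μ + v * z) * cexp (z * μ + v * z ^ 2 / 2) := by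
  have hmgf : HasDerivAt (complexMGF id (gaussianReal μ v))
      (∫ x, x * cexp (z * x) ∂gaussianReal μ v) z :=
    hasDerivAt_complexMGF (by simp [integrableExpSet_id_gaussianReal])
  have hexp : HasDerivAt (fun z : ℂ ↦ cexp (z * μ + v * z ^ 2 / 2))
      ((μ + v * z) * cexp (z * μ + v * z ^ 2 / 2)) z := by
    have hexponent : HasDerivAt (fun z : ℂ ↦ z * μ + v * z ^ 2 / 2) (μ + v * z) z := by
      refine (((hasDerivAt_id' z).mul_const (μ : ℂ)).fun_add
        (((hasDerivAt_pow 2 z).const_mul (v : ℂ)).div_const 2)).congr_deriv ?_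
      ring
    simpa only [mul_comm (cexp _)] using hexponent.cexp
  rw [funext complexMGF_id_gaussianReal] at hmgf
  exact hmgf.unique hexp

theorem integrable_mul_cexp_mul_I_gaussianReal (μ : ℝ) (v : ℝ≥0) (φ : ℝ) :
    Integrable (fun x : ℝ ↦ x * cexp ((x + φ : ℝ) * I)) (gaussianReal μ v) := by
  refine ((memLp_id_gaussianReal 1).integrable le_rfl).ofReal.mul_bdd (c := 1) (by fun_prop) ?_
  exact ae_of_all _ fun x ↦ by rw [norm_exp_ofReal_mul_I]

theorem integral_mul_cexp_add_mul_I_gaussianReal (μ : ℝ) (v : ℝ≥0) (φ : ℝ) :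
    ∫ x, x * cexp ((x + φ : ℝ) * I) ∂gaussianReal μ v
      = (μ + v * I) * Real.exp (-v / 2) * cexp ((μ + φ : ℝ) * I) := by
  calc ∫ x, x * cexp ((x + φ : ℝ) * I) ∂gaussianReal μ v
      = (∫ x, x * cexp (I * x) ∂gaussianReal μ v) * cexp (φ * I) := by
        rw [← integral_mul_const]
        congr with x
        push_cast
        rw [add_mul, Complex.exp_add, mul_comm I]
        ring
    _ = (μ + v * I) * Real.exp (-v / 2) * cexp ((μ + φ : ℝ) * I) := by
        rw [integral_mul_cexp_mul_gaussianReal, mul_assoc, ← Complex.exp_add, mul_assoc,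
          ofReal_exp, ← Complex.exp_add]
        push_cast
        congr 2
        linear_combination (v / 2 : ℂ) * I_sq

theorem one_add_mul_I_eq_sqrt_mul_cexp_arctan (a : ℝ) :
    (1 + a * I : ℂ) = √(1 + a ^ 2) * cexp (Real.arctan a * I) := by
  have hs : (√(1 + a ^ 2) : ℂ) ≠ 0 := by exact_mod_cast (by positivity : √(1 + a ^ 2) ≠ 0)
  rw [exp_mul_I, ← ofReal_cos, ← ofReal_sin, Real.cos_arctan, Real.sin_arctan]
  push_cast
  field_simp

theorem integral_mul_cos_add_gaussianReal (μ : ℝ) (v : ℝ≥0) (φ : ℝ) :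
    ∫ x, x * Real.cos (x + φ) ∂gaussianReal μ v
      = (∫ x, x * cexp ((x + φ : ℝ) * I) ∂gaussianReal μ v).re := by
  have h := integral_re (integrable_mul_cexp_mul_I_gaussianReal μ v φ)
  simpa only [RCLike.re_to_complex, re_ofReal_mul, exp_ofReal_mul_I_re] using h

theorem integral_mul_sin_add_gaussianReal (μ : ℝ) (v : ℝ≥0) (φ : ℝ) :
    ∫ x, x * Real.sin (x + φ) ∂gaussianReal μ v
      = (∫ x, x * cexp ((x + φ : ℝ) * I) ∂gaussianReal μ v).im := by
  have h := integral_im (integrable_mul_cexp_mul_I_gaussianReal μ v φ)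
  simpa only [RCLike.im_to_complex, im_ofReal_mul, exp_ofReal_mul_I_im] using h

theorem integral_mul_cexp_gaussianReal_one (v : ℝ≥0) (θ : ℝ) :
    ∫ x, x * cexp ((x + (θ - 1) : ℝ) * I) ∂gaussianReal 1 v
      = (Real.exp (-v / 2) * √(1 + v ^ 2) : ℝ) * cexp ((θ + Real.arctan v : ℝ) * I) := by
  rw [integral_mul_cexp_add_mul_I_gaussianReal, ofReal_one,
    one_add_mul_I_eq_sqrt_mul_cexp_arctan, add_sub_cancel, ofReal_add, add_mul, Complex.exp_add]
  push_cast
  ring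

theorem stmt16_general (b1 b2 θ : ℝ) (hb1 : 0 < b1) :
    let s2 : ℝ := b2 ^ 2 / (2 * b1)
    let rbar : ℝ := Real.exp (-(b2 ^ 2 / (4 * b1))) * Real.sqrt (1 + s2 ^ 2)
    let θs : ℝ := Real.arctan s2
    (∫ r, r * Real.cos (r + θ - 1) ∂(gaussianReal 1 s2.toNNReal)
        = rbar * Real.cos (θ + θs)) ∧
    (∫ r, r * Real.sin (r + θ - 1) ∂(gaussianReal 1 s2.toNNReal)
        = rbar * Real.sin (θ + θs)) := by
  intro s2 rbar θs
  have hs2 : (s2.toNNReal : ℝ) = s2 := Real.coe_toNNReal _ (by positivity)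
  have hrbar : rbar = Real.exp (-s2 / 2) * √(1 + s2 ^ 2) := by
    simp only [rbar, s2]; ring_nf
  have hval := integral_mul_cexp_gaussianReal_one s2.toNNReal θ
  rw [hs2, ← hrbar] at hval
  simp_rw [add_sub_assoc]
  rw [integral_mul_cos_add_gaussianReal, integral_mul_sin_add_gaussianReal, hval,
    re_ofReal_mul, im_ofReal_mul, exp_ofReal_mul_I_re, exp_ofReal_mul_I_im]
  exact ⟨rfl, rfl⟩

/-- For `r` Gaussian with mean `1` and variance `s² = b₂²/(2b₁)`,
`E[r cos(r + θ − 1)] = e^{−s²/2} √(1 + s⁴) cos(θ + θ_s)` and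
`E[r sin(r + θ − 1)] = e^{−s²/2} √(1 + s⁴) sin(θ + θ_s)` with `θ_s = arctan s²`;
hence the averaged slow manifold of the oscillating half-moons system is the circle of radius
`r̄ = e^{−b₂²/(4b₁)} √(1 + (b₂²/(2b₁))²)` with angular shift `θ_s = arctan(b₂²/(2b₁))`. -/
theorem stmt16 (b1 b2 θ : ℝ) (hb1 : 0 < b1) (hb2 : 0 < b2) :
    let s2 : ℝ := b2 ^ 2 / (2 * b1)
    let rbar : ℝ := Real.exp (-(b2 ^ 2 / (4 * b1))) * Real.sqrt (1 + s2 ^ 2)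
    let θs : ℝ := Real.arctan s2
    (∫ r, r * Real.cos (r + θ - 1) ∂(gaussianReal 1 s2.toNNReal)
        = rbar * Real.cos (θ + θs)) ∧
    (∫ r, r * Real.sin (r + θ - 1) ∂(gaussianReal 1 s2.toNNReal)
        = rbar * Real.sin (θ + θs)) :=
  stmt16_general b1 b2 θ hb1
end
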